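/- arXiv:1912.06342 — 5 statements merged into one kernel-verified Lean document; each statement's English description precedes it below -/
import Mathlib

section
/- Let ε > 0. Define F⁺(γ) = (1/n²)·Σ_{k,l=1}^n [a_kl(γ) − ε·log(1 + a_kl(γ)/ε)]·B_kl·1{B_kl>0} and F⁻(γ) = −(1/n²)·Σ_{k,l=1}^n [a_kl(γ) − ε·log(1 + a_kl(γ)/ε)]·B_kl·1{B_kl<0}, for γ ∈ ℝ^{p×d}. Then: (i) F⁺ and F⁻ are convex functions on ℝ^{p×d}; (ii) V²_{n,ε}(γ) = F⁺(γ) − F⁻(γ) for all γ; and (iii) V²_{n,ε} is continuous and differentiable on all of ℝ^{p×d}. -/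
/-!
Write `φ_ε(t) = t - ε log(1 + t/ε)`, so that every summand of `V²_{n,ε}` is
`φ_ε(‖L_kl γ‖) B_kl` for the linear map `L_kl γ = γᵀ (Z_k - Z_l)`.  On `[0, ∞)` the function
`φ_ε` is convex and nondecreasing, hence `γ ↦ φ_ε(‖L_kl γ‖)` is convex, and nonnegative
combinations of these are convex; splitting `B` into its positive and negative parts gives
`F⁺` and `F⁻`.  Since `φ_ε'(t) = t/(t + ε)` vanishes at `0`, the kink of the norm at the
origin is smoothed out and `γ ↦ φ_ε(‖L_kl γ‖)` is differentiable everywhere.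
-/

open Matrix

attribute [local instance] Matrix.normedAddCommGroup Matrix.normedSpace

/-- Euclidean norm of a vector in `ℝ^m`. -/
noncomputable def enorm {m : ℕ} (v : Fin m → ℝ) : ℝ := Real.sqrt (∑ i, v i ^ 2)

/-- `a_kl(γ) = ‖γᵀ(Z_k − Z_l)‖₂`. -/
noncomputable def akl (n p d : ℕ) (Z : Fin n → Fin p → ℝ)
    (γ : Matrix (Fin p) (Fin d) ℝ) (k l : Fin n) : ℝ :=
  enorm (γᵀ *ᵥ (Z k - Z l))

/-- The perturbed objective `V²_{n,ε}`. -/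
noncomputable def Vne (n p d : ℕ) (Z : Fin n → Fin p → ℝ) (B : Fin n → Fin n → ℝ)
    (ε : ℝ) (γ : Matrix (Fin p) (Fin d) ℝ) : ℝ :=
  (1 / (n : ℝ) ^ 2) * ∑ k, ∑ l,
    (akl n p d Z γ k l - ε * Real.log (1 + akl n p d Z γ k l / ε)) * B k l

/-- `F⁺(γ)`, the positive part of the DC decomposition. -/
noncomputable def Fplus (n p d : ℕ) (Z : Fin n → Fin p → ℝ) (B : Fin n → Fin n → ℝ)
    (ε : ℝ) (γ : Matrix (Fin p) (Fin d) ℝ) : ℝ :=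
  (1 / (n : ℝ) ^ 2) * ∑ k, ∑ l,
    (akl n p d Z γ k l - ε * Real.log (1 + akl n p d Z γ k l / ε)) *
      (if 0 < B k l then B k l else 0)

/-- `F⁻(γ)`, the negative part of the DC decomposition. -/
noncomputable def Fminus (n p d : ℕ) (Z : Fin n → Fin p → ℝ) (B : Fin n → Fin n → ℝ)
    (ε : ℝ) (γ : Matrix (Fin p) (Fin d) ℝ) : ℝ :=
  -((1 / (n : ℝ) ^ 2) * ∑ k, ∑ l,
    (akl n p d Z γ k l - ε * Real.log (1 + akl n p d Z γ k l / ε)) *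
      (if B k l < 0 then B k l else 0))

open Set

noncomputable def perturbedDist (ε t : ℝ) : ℝ := t - ε * Real.log (1 + t / ε)

section PerturbedDist

variable {ε : ℝ}

lemma hasDerivAt_perturbedDist (hε : 0 < ε) {t : ℝ} (ht : -ε < t) :
    HasDerivAt (perturbedDist ε) (t / (t + ε)) t := by
  have hpos : 0 < 1 + t / ε := by
    rw [← div_self hε.ne', ← add_div]
    exact div_pos (by linarith) hε
  have hlog : HasDerivAt (fun s => Real.log (1 + s / ε)) (1 / ε / (1 + t / ε)) t := by
    simpa using (((hasDerivAt_id t).div_const ε).const_add 1).log hpos.ne'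
  refine ((hasDerivAt_id' t).sub (hlog.const_mul ε)).congr_deriv ?_
  have hε0 : ε ≠ 0 := hε.ne'
  have hne : ε + t ≠ 0 := by linarith
  rw [add_comm t ε]
  field_simp
  ring

lemma monotoneOn_perturbedDist (hε : 0 < ε) : MonotoneOn (perturbedDist ε) (Ici 0) := by
  refine monotoneOn_of_deriv_nonneg (convex_Ici 0) (fun t ht => ?_) (fun t ht => ?_) ?_
  · exact (hasDerivAt_perturbedDist hε (by linarith [mem_Ici.1 ht])).continuousAt
      |>.continuousWithinAt
  · rw [interior_Ici] at ht
    exact (hasDerivAt_perturbedDist hε (by linarith [mem_Ioi.1 ht])).differentiableAt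
      |>.differentiableWithinAt
  · rw [interior_Ici]
    intro t (ht : 0 < t)
    rw [(hasDerivAt_perturbedDist hε (by linarith)).deriv]
    positivity

lemma convexOn_perturbedDist (hε : 0 < ε) : ConvexOn ℝ (Ioi (-ε)) (perturbedDist ε) := by
  have hderiv : ∀ t ∈ Ioi (-ε), HasDerivAt (perturbedDist ε) (t / (t + ε)) t :=
    fun t ht => hasDerivAt_perturbedDist hε ht
  refine MonotoneOn.convexOn_of_deriv (convex_Ioi _)
    (fun t ht => (hderiv t ht).continuousAt.continuousWithinAt) ?_ ?_ <;> rw [interior_Ioi]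
  · exact fun t ht => (hderiv t ht).differentiableAt.differentiableWithinAt
  · intro x (hx : -ε < x) y (hy : -ε < y) hxy
    rw [(hderiv x hx).deriv, (hderiv y hy).deriv, div_le_div_iff₀ (by linarith) (by linarith)]
    nlinarith

end PerturbedDist

lemma ConvexOn.fun_sum {ι E : Type*} [AddCommMonoid E] [Module ℝ E] {s : Set E}
    (hs : Convex ℝ s) (t : Finset ι) {f : ι → E → ℝ} (hf : ∀ i ∈ t, ConvexOn ℝ s (f i)) :
    ConvexOn ℝ s (fun x => ∑ i ∈ t, f i x) := by
  induction t using Finset.cons_induction with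
  | empty => simpa using convexOn_const 0 hs
  | cons i t hi ih =>
    simp only [Finset.sum_cons]
    exact (hf i (t.mem_cons_self i)).add (ih fun j hj => hf j (Finset.mem_cons_of_mem hj))

lemma ConvexOn.comp_norm_linearMap {E F : Type*} [SeminormedAddCommGroup E] [NormedSpace ℝ E]
    [AddCommGroup F] [Module ℝ F] {f : ℝ → ℝ} (hf : ConvexOn ℝ (Ici 0) f)
    (hf_mono : MonotoneOn f (Ici 0)) (L : F →ₗ[ℝ] E) :
    ConvexOn ℝ univ (fun x => f ‖L x‖) := by
  refine ⟨convex_univ, fun x _ y _ a b ha hb hab => ?_⟩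
  have hnorm := (convexOn_univ_norm.comp_linearMap L).2 (mem_univ x) (mem_univ y) ha hb hab
  calc f ‖L (a • x + b • y)‖ ≤ f (a • ‖L x‖ + b • ‖L y‖) :=
        hf_mono (norm_nonneg _) (by simp only [mem_Ici, smul_eq_mul]; positivity) hnorm
    _ ≤ a • f ‖L x‖ + b • f ‖L y‖ := hf.2 (norm_nonneg _) (norm_nonneg _) ha hb hab

lemma hasFDerivAt_comp_norm_zero {E : Type*} [NormedAddCommGroup E] [NormedSpace ℝ E]
    {f : ℝ → ℝ} (hf : HasDerivAt f 0 0) :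
    HasFDerivAt (fun x : E => f ‖x‖) (0 : E →L[ℝ] ℝ) 0 := by
  rw [hasDerivAt_iff_isLittleO] at hf
  simp only [smul_zero, sub_zero] at hf
  rw [hasFDerivAt_iff_isLittleO_nhds_zero]
  have h : (fun x : E => f ‖x‖ - f 0) =o[nhds 0] (fun x : E => ‖x‖) :=
    hf.comp_tendsto (tendsto_norm_zero (E := E))
  simpa using h.trans_isBigO (Asymptotics.isBigO_norm_left.mpr (Asymptotics.isBigO_refl _ _))

lemma differentiable_comp_norm {E : Type*} [NormedAddCommGroup E] [InnerProductSpace ℝ E]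
    {f : ℝ → ℝ} (hf : ∀ t > 0, DifferentiableAt ℝ f t) (hf₀ : HasDerivAt f 0 0) :
    Differentiable ℝ (fun x : E => f ‖x‖) := by
  intro x
  rcases eq_or_ne x 0 with rfl | hx
  · exact (hasFDerivAt_comp_norm_zero hf₀).differentiableAt
  · exact (hf _ (norm_pos_iff.mpr hx)).comp x (differentiableAt_id.norm ℝ hx)

noncomputable def transposeMulVecLin {m n : Type*} [Fintype m] (v : m → ℝ) :
    Matrix m n ℝ →ₗ[ℝ] EuclideanSpace ℝ n :=
  (WithLp.linearEquiv 2 ℝ (n → ℝ)).symm.toLinearMap ∘ₗ (Matrix.mulVecBilin ℝ ℝ).flip v ∘ₗ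
    (Matrix.transposeLinearEquiv m n ℝ ℝ).toLinearMap

lemma enorm_eq_norm_toLp {m : ℕ} (v : Fin m → ℝ) : _root_.enorm v = ‖WithLp.toLp 2 v‖ := by
  simp [_root_.enorm, EuclideanSpace.norm_eq]

lemma akl_eq_norm {n p d : ℕ} (Z : Fin n → Fin p → ℝ) (γ : Matrix (Fin p) (Fin d) ℝ)
    (k l : Fin n) : akl n p d Z γ k l = ‖transposeMulVecLin (Z k - Z l) γ‖ :=
  enorm_eq_norm_toLp _

section Objective

variable {n p d : ℕ} (Z : Fin n → Fin p → ℝ) (w : Fin n → Fin n → ℝ) {ε : ℝ}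

lemma Vne_eq_sum_perturbedDist :
    Vne n p d Z w ε = fun γ => (1 / (n : ℝ) ^ 2) *
      ∑ k, ∑ l, perturbedDist ε ‖transposeMulVecLin (Z k - Z l) γ‖ * w k l := by
  funext γ
  simp only [Vne, akl_eq_norm]
  rfl

lemma convexOn_Vne (hε : 0 < ε) (hw : ∀ k l, 0 ≤ w k l) :
    ConvexOn ℝ univ (Vne n p d Z w ε) := by
  have hterm (k l : Fin n) : ConvexOn ℝ univ
      (fun γ : Matrix (Fin p) (Fin d) ℝ => perturbedDist ε ‖transposeMulVecLin (Z k - Z l) γ‖) :=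
    ((convexOn_perturbedDist hε).subset (Ici_subset_Ioi.2 (neg_lt_zero.2 hε)) (convex_Ici 0))
      |>.comp_norm_linearMap (monotoneOn_perturbedDist hε) _
  rw [Vne_eq_sum_perturbedDist]
  refine ConvexOn.smul (by positivity) <| ConvexOn.fun_sum convex_univ _ fun k _ =>
    ConvexOn.fun_sum convex_univ _ fun l _ => ?_
  simpa only [smul_eq_mul, mul_comm] using (hterm k l).smul (hw k l)

lemma differentiable_Vne (hε : 0 < ε) : Differentiable ℝ (Vne n p d Z w ε) := by
  have hφ : Differentiable ℝ (fun x : EuclideanSpace ℝ (Fin d) => perturbedDist ε ‖x‖) := by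
    refine differentiable_comp_norm (fun t ht => ?_) ?_
    · exact (hasDerivAt_perturbedDist hε (by linarith)).differentiableAt
    · simpa using hasDerivAt_perturbedDist hε (neg_lt_zero.2 hε)
  rw [Vne_eq_sum_perturbedDist]
  refine Differentiable.const_mul (Differentiable.fun_sum fun k _ =>
    Differentiable.fun_sum fun l _ => Differentiable.mul_const ?_ _) _
  exact hφ.comp (LinearMap.toContinuousLinearMap (transposeMulVecLin (Z k - Z l))).differentiable

end Objective

lemma Fplus_eq_Vne {n p d : ℕ} (Z : Fin n → Fin p → ℝ) (B : Fin n → Fin n → ℝ) (ε : ℝ) :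
    Fplus n p d Z B ε = Vne n p d Z (fun k l => if 0 < B k l then B k l else 0) ε :=
  rfl

lemma Fminus_eq_Vne {n p d : ℕ} (Z : Fin n → Fin p → ℝ) (B : Fin n → Fin n → ℝ) (ε : ℝ) :
    Fminus n p d Z B ε = Vne n p d Z (fun k l => if B k l < 0 then -B k l else 0) ε := by
  ext γ
  simp only [Fminus, Vne, ← mul_neg, ← Finset.sum_neg_distrib, neg_ite, neg_zero]

lemma Vne_eq_Fplus_sub_Fminus {n p d : ℕ} (Z : Fin n → Fin p → ℝ) (B : Fin n → Fin n → ℝ)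
    (ε : ℝ) (γ : Matrix (Fin p) (Fin d) ℝ) :
    Vne n p d Z B ε γ = Fplus n p d Z B ε γ - Fminus n p d Z B ε γ := by
  simp only [Vne, Fplus, Fminus, sub_neg_eq_add, ← mul_add, ← Finset.sum_add_distrib]
  congr 1
  refine Finset.sum_congr rfl fun k _ => Finset.sum_congr rfl fun l _ => ?_
  congr 1
  split_ifs <;> linarith

/-- (i) F⁺ and F⁻ are convex on ℝ^{p×d}; (ii) V²_{n,ε} = F⁺ − F⁻;
(iii) V²_{n,ε} is continuous and differentiable on all of ℝ^{p×d}. -/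
theorem stmt_6 (n p d : ℕ) (Z : Fin n → Fin p → ℝ) (B : Fin n → Fin n → ℝ)
    (ε : ℝ) (hε : 0 < ε) :
    ConvexOn ℝ Set.univ (Fplus n p d Z B ε) ∧
    ConvexOn ℝ Set.univ (Fminus n p d Z B ε) ∧
    (∀ γ : Matrix (Fin p) (Fin d) ℝ,
      Vne n p d Z B ε γ = Fplus n p d Z B ε γ - Fminus n p d Z B ε γ) ∧
    Continuous (Vne n p d Z B ε) ∧
    Differentiable ℝ (Vne n p d Z B ε) := by
  have hdiff : Differentiable ℝ (Vne n p d Z B ε) := differentiable_Vne Z B hε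
  refine ⟨?_, ?_, Vne_eq_Fplus_sub_Fminus Z B ε, hdiff.continuous, hdiff⟩
  · rw [Fplus_eq_Vne]
    exact convexOn_Vne Z _ hε fun k l => by split_ifs with h <;> [exact h.le; rfl]
  · rw [Fminus_eq_Vne]
    exact convexOn_Vne Z _ hε fun k l => by split_ifs with h <;> [linarith; rfl]
end

section
/- As ε decreases to 0, the perturbed objective V²_{n,ε} converges to V_n² uniformly on the Stiefel manifold St(d,p); that is, for every δ > 0 there exists ε₀ > 0 such that for all ε ∈ (0, ε₀) and all γ ∈ ℝ^{p×d} with γᵀγ = I_d, one has |V_n²(γ) − V²_{n,ε}(γ)| ≤ δ. -/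
open Matrix

/-- The objective `V_n²`. -/
noncomputable def Vn (n p d : ℕ) (Z : Fin n → Fin p → ℝ) (B : Fin n → Fin n → ℝ)
    (γ : Matrix (Fin p) (Fin d) ℝ) : ℝ :=
  (1 / (n : ℝ) ^ 2) * ∑ k, ∑ l, akl n p d Z γ k l * B k l

/-!
For `ε > 0` and `a ≥ 0`, `0 ≤ ε log(1 + a/ε) ≤ 2√ε √a` because
`log(1 + x) ≤ 2 log(1 + √x) ≤ 2√x`. On the Stiefel manifold the columns of `γ` are
orthonormal, so Bessel's inequality gives `a_kl(γ) ≤ ‖Z_k − Z_l‖`. Hence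
`|V_n²(γ) − V²_{n,ε}(γ)| ≤ C √ε` with `C` independent of `γ`.
-/

theorem Real.log_one_add_le_two_mul_sqrt {x : ℝ} (hx : 0 ≤ x) :
    Real.log (1 + x) ≤ 2 * √x := by
  have hsq : 1 + x ≤ (1 + √x) ^ 2 := by nlinarith [Real.sq_sqrt hx, Real.sqrt_nonneg x]
  calc Real.log (1 + x) ≤ Real.log ((1 + √x) ^ 2) := Real.log_le_log (by positivity) hsq
    _ = 2 * Real.log (1 + √x) := by rw [Real.log_pow]; norm_num
    _ ≤ 2 * √x := by
      have := Real.log_le_sub_one_of_pos (x := 1 + √x) (by positivity)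
      linarith

theorem Real.mul_log_one_add_div_le {ε a : ℝ} (hε : 0 < ε) (ha : 0 ≤ a) :
    ε * Real.log (1 + a / ε) ≤ 2 * √ε * √a := by
  calc ε * Real.log (1 + a / ε) ≤ ε * (2 * √(a / ε)) :=
        mul_le_mul_of_nonneg_left (Real.log_one_add_le_two_mul_sqrt (by positivity)) hε.le
    _ = 2 * √ε * √a := by
      rw [Real.sqrt_div' _ hε.le]
      field_simp
      rw [Real.sq_sqrt hε.le, mul_comm]

theorem Real.mul_log_one_add_div_nonneg {ε a : ℝ} (hε : 0 < ε) (ha : 0 ≤ a) :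
    0 ≤ ε * Real.log (1 + a / ε) :=
  mul_nonneg hε.le (Real.log_nonneg (by linarith [div_nonneg ha hε.le]))

namespace Matrix

variable {ι κ : Type*} [Fintype ι]

theorem orthonormal_toLp_transpose_of_transpose_mul_self_eq_one [DecidableEq κ]
    {γ : Matrix ι κ ℝ} (hγ : γᵀ * γ = 1) : Orthonormal ℝ fun j => WithLp.toLp 2 (γᵀ j) := by
  rw [orthonormal_iff_ite]
  intro i j
  rw [EuclideanSpace.inner_eq_star_dotProduct, ← one_apply, ← hγ, mul_apply']
  exact dotProduct_comm _ _

theorem sum_transpose_mulVec_sq_le [Fintype κ] [DecidableEq κ] {γ : Matrix ι κ ℝ}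
    (hγ : γᵀ * γ = 1) (v : ι → ℝ) : ∑ j, (γᵀ *ᵥ v) j ^ 2 ≤ ∑ i, v i ^ 2 := by
  have := (orthonormal_toLp_transpose_of_transpose_mul_self_eq_one hγ).sum_inner_products_le
    (WithLp.toLp 2 v) (s := Finset.univ)
  simp only [EuclideanSpace.norm_eq, EuclideanSpace.inner_eq_star_dotProduct, Real.norm_eq_abs,
    sq_abs, Real.sq_sqrt (Finset.sum_nonneg fun _ _ => sq_nonneg _), star_trivial] at this
  simpa only [mulVec, dotProduct_comm] using this

end Matrix

section Objective

variable {n p d : ℕ} (Z : Fin n → Fin p → ℝ) (B : Fin n → Fin n → ℝ)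

theorem akl_nonneg (γ : Matrix (Fin p) (Fin d) ℝ) (k l : Fin n) : 0 ≤ akl n p d Z γ k l :=
  Real.sqrt_nonneg _

theorem akl_le {γ : Matrix (Fin p) (Fin d) ℝ} (hγ : γᵀ * γ = 1) (k l : Fin n) :
    akl n p d Z γ k l ≤ _root_.enorm (Z k - Z l) :=
  Real.sqrt_le_sqrt (Matrix.sum_transpose_mulVec_sq_le hγ _)

theorem Vn_sub_Vne (ε : ℝ) (γ : Matrix (Fin p) (Fin d) ℝ) :
    Vn n p d Z B γ - Vne n p d Z B ε γ =
      (1 / (n : ℝ) ^ 2) * ∑ k, ∑ l, ε * Real.log (1 + akl n p d Z γ k l / ε) * B k l := by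
  simp only [Vn, Vne, ← mul_sub, ← Finset.sum_sub_distrib, ← sub_mul, sub_sub_cancel]

noncomputable def perturbationBound : ℝ :=
  (1 / (n : ℝ) ^ 2) * ∑ k, ∑ l, 2 * √(_root_.enorm (Z k - Z l)) * |B k l|

theorem perturbationBound_nonneg : 0 ≤ perturbationBound Z B := by
  unfold perturbationBound
  positivity

theorem abs_Vn_sub_Vne_le {ε : ℝ} (hε : 0 < ε) {γ : Matrix (Fin p) (Fin d) ℝ}
    (hγ : γᵀ * γ = 1) :
    |Vn n p d Z B γ - Vne n p d Z B ε γ| ≤ √ε * perturbationBound Z B := by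
  have hterm (k l : Fin n) : |ε * Real.log (1 + akl n p d Z γ k l / ε) * B k l| ≤
      √ε * (2 * √(_root_.enorm (Z k - Z l)) * |B k l|) := by
    have ha := akl_nonneg Z γ k l
    rw [abs_mul, abs_of_nonneg (Real.mul_log_one_add_div_nonneg hε ha)]
    have hsqrt : √(akl n p d Z γ k l) ≤ √(_root_.enorm (Z k - Z l)) :=
      Real.sqrt_le_sqrt (akl_le Z hγ k l)
    calc ε * Real.log (1 + akl n p d Z γ k l / ε) * |B k l|
        ≤ 2 * √ε * √(akl n p d Z γ k l) * |B k l| :=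
          mul_le_mul_of_nonneg_right (Real.mul_log_one_add_div_le hε ha) (abs_nonneg _)
      _ ≤ 2 * √ε * √(_root_.enorm (Z k - Z l)) * |B k l| := by gcongr
      _ = √ε * (2 * √(_root_.enorm (Z k - Z l)) * |B k l|) := by ring
  rw [Vn_sub_Vne, abs_mul, abs_of_nonneg (by positivity), perturbationBound, mul_left_comm]
  gcongr
  calc |∑ k, ∑ l, ε * Real.log (1 + akl n p d Z γ k l / ε) * B k l|
      ≤ ∑ k, ∑ l, |ε * Real.log (1 + akl n p d Z γ k l / ε) * B k l| :=
        (Finset.abs_sum_le_sum_abs _ _).trans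
          (Finset.sum_le_sum fun k _ => Finset.abs_sum_le_sum_abs _ _)
    _ ≤ ∑ k, ∑ l, √ε * (2 * √(_root_.enorm (Z k - Z l)) * |B k l|) :=
        Finset.sum_le_sum fun k _ => Finset.sum_le_sum fun l _ => hterm k l
    _ = √ε * ∑ k, ∑ l, 2 * √(_root_.enorm (Z k - Z l)) * |B k l| := by
        simp only [Finset.mul_sum]

end Objective

theorem exists_pos_forall_sqrt_mul_le {C δ : ℝ} (hC : 0 ≤ C) (hδ : 0 < δ) :
    ∃ ε₀ : ℝ, 0 < ε₀ ∧ ∀ ε : ℝ, 0 < ε → ε < ε₀ → √ε * C ≤ δ := by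
  have hη : 0 < δ / (C + 1) := by positivity
  refine ⟨(δ / (C + 1)) ^ 2, by positivity, fun ε hε hεlt => ?_⟩
  have hsqrt : √ε ≤ δ / (C + 1) := by
    simpa [Real.sqrt_sq hη.le] using Real.sqrt_le_sqrt hεlt.le
  calc √ε * C ≤ δ / (C + 1) * C := by gcongr
    _ ≤ δ := by rw [div_mul_eq_mul_div, div_le_iff₀ (by positivity)]; nlinarith

/-- As ε ↓ 0, `V²_{n,ε}` converges to `V_n²` uniformly on the
Stiefel manifold `St(d,p) = {γ : γᵀγ = I_d}`. -/
theorem stmt_7 (n p d : ℕ) (Z : Fin n → Fin p → ℝ) (B : Fin n → Fin n → ℝ) :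
    ∀ δ : ℝ, 0 < δ → ∃ ε₀ : ℝ, 0 < ε₀ ∧
      ∀ ε : ℝ, 0 < ε → ε < ε₀ →
        ∀ γ : Matrix (Fin p) (Fin d) ℝ, γᵀ * γ = 1 →
          |Vn n p d Z B γ - Vne n p d Z B ε γ| ≤ δ := by
  intro δ hδ
  obtain ⟨ε₀, hε₀, hsmall⟩ := exists_pos_forall_sqrt_mul_le (perturbationBound_nonneg Z B) hδ
  exact ⟨ε₀, hε₀, fun ε hε hεlt γ hγ =>
    (abs_Vn_sub_Vne_le Z B hε hγ).trans (hsmall ε hε hεlt)⟩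
end

section
/- Let ε > 0 and c ∈ ℝ^p be fixed. For all p×d real matrices γ and γ', the supporting-hyperplane inequality holds: ‖γᵀc‖₂ − ε·log(1 + ‖γᵀc‖₂/ε) ≥ ‖γ'ᵀc‖₂ − ε·log(1 + ‖γ'ᵀc‖₂/ε) + tr((γ − γ')ᵀ · c cᵀ γ' / (‖γ'ᵀc‖₂ + ε)). -/
/-
The function `φ(x) = x − ε log(1 + x/ε)` has derivative `x/(x + ε)`, and `φ(a) − φ(b)` minus
this slope times `a − b` is `ε (r − 1 − log r)` with `r = (ε + a)/(ε + b)`, which is nonnegative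
since `log r ≤ r − 1`. Along `γ ↦ γᵀc` the trace term equals `((γ − γ')ᵀc ⬝ γ'ᵀc)/(‖γ'ᵀc‖ + ε)`,
and Cauchy–Schwarz bounds it by the tangent-line term of `φ` at `‖γ'ᵀc‖`.
-/

open Matrix

/-- Euclidean norm of a vector in `ℝ^m`. -/
noncomputable def enorm₂ {m : ℕ} (v : Fin m → ℝ) : ℝ := Real.sqrt (∑ i, v i ^ 2)

theorem tangent_le_sub_mul_log_one_add_div {ε a b : ℝ} (hε : 0 < ε) (ha : 0 < ε + a)
    (hb : 0 < ε + b) :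
    b - ε * Real.log (1 + b / ε) + b / (b + ε) * (a - b) ≤ a - ε * Real.log (1 + a / ε) := by
  have hlog : Real.log (1 + a / ε) - Real.log (1 + b / ε) = Real.log ((ε + a) / (ε + b)) := by
    rw [one_add_div hε.ne', one_add_div hε.ne', ← Real.log_div (by positivity) (by positivity)]
    congr 1
    field_simp
  have hle : Real.log ((ε + a) / (ε + b)) ≤ (ε + a) / (ε + b) - 1 :=
    Real.log_le_sub_one_of_pos (div_pos ha hb)
  have hgap : ε * ((ε + a) / (ε + b) - 1) = a - b - b / (b + ε) * (a - b) := by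
    rw [add_comm b]; field_simp; ring
  nlinarith [mul_le_mul_of_nonneg_left hle hε.le]

theorem Matrix.trace_transpose_mul_vecMulVec_self_mul {m n R : Type*} [Fintype m] [Fintype n]
    [CommRing R] (A B : Matrix m n R) (c : m → R) :
    trace (Aᵀ * (vecMulVec c c * B)) = (Aᵀ *ᵥ c) ⬝ᵥ (Bᵀ *ᵥ c) := by
  simp only [trace, diag, mul_apply, transpose_apply, vecMulVec_apply, mulVec, dotProduct,
    Finset.mul_sum, Finset.sum_mul]
  refine Finset.sum_congr rfl fun j _ => ?_
  rw [Finset.sum_comm]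
  exact Finset.sum_congr rfl fun i _ => Finset.sum_congr rfl fun k _ => by ring

theorem enorm₂_nonneg {m : ℕ} (v : Fin m → ℝ) : 0 ≤ enorm₂ v := Real.sqrt_nonneg _

theorem dotProduct_self_eq_enorm₂_sq {m : ℕ} (v : Fin m → ℝ) : v ⬝ᵥ v = enorm₂ v ^ 2 := by
  rw [enorm₂, Real.sq_sqrt (Finset.sum_nonneg fun _ _ => sq_nonneg _)]
  simp only [dotProduct, sq]

theorem dotProduct_le_enorm₂_mul_enorm₂ {m : ℕ} (u v : Fin m → ℝ) :
    u ⬝ᵥ v ≤ enorm₂ u * enorm₂ v :=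
  Real.sum_mul_le_sqrt_mul_sqrt _ _ _

/-- For ε > 0 and fixed c ∈ ℝ^p, the supporting-hyperplane
inequality for the convex function `γ ↦ ‖γᵀc‖₂ − ε·log(1 + ‖γᵀc‖₂/ε)`:
for all p×d matrices γ and γ',
`f(γ) ≥ f(γ') + tr((γ − γ')ᵀ · c cᵀ γ' / (‖γ'ᵀc‖₂ + ε))`. -/
theorem stmt_9 (p d : ℕ) (ε : ℝ) (hε : 0 < ε) (c : Fin p → ℝ)
    (γ γ' : Matrix (Fin p) (Fin d) ℝ) :
    enorm₂ (γᵀ *ᵥ c) - ε * Real.log (1 + enorm₂ (γᵀ *ᵥ c) / ε)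
      ≥ enorm₂ (γ'ᵀ *ᵥ c) - ε * Real.log (1 + enorm₂ (γ'ᵀ *ᵥ c) / ε)
        + Matrix.trace ((γ - γ')ᵀ *
            ((enorm₂ (γ'ᵀ *ᵥ c) + ε)⁻¹ • (Matrix.vecMulVec c c * γ'))) := by
  set u := γᵀ *ᵥ c
  set v := γ'ᵀ *ᵥ c
  have htrace : trace ((γ - γ')ᵀ * ((enorm₂ v + ε)⁻¹ • (vecMulVec c c * γ')))
      = (u ⬝ᵥ v - enorm₂ v ^ 2) / (enorm₂ v + ε) := by
    rw [Matrix.mul_smul, trace_smul, trace_transpose_mul_vecMulVec_self_mul, transpose_sub, sub_mulVec,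
      sub_dotProduct, dotProduct_self_eq_enorm₂_sq, smul_eq_mul, inv_mul_eq_div]
  have hcs := dotProduct_le_enorm₂_mul_enorm₂ u v
  have hu := enorm₂_nonneg u
  have hv := enorm₂_nonneg v
  have htangent := tangent_le_sub_mul_log_one_add_div (a := enorm₂ u) hε (by linarith)
    (by linarith : 0 < ε + enorm₂ v)
  have hslope : (u ⬝ᵥ v - enorm₂ v ^ 2) / (enorm₂ v + ε)
      ≤ enorm₂ v / (enorm₂ v + ε) * (enorm₂ u - enorm₂ v) := by
    rw [div_mul_eq_mul_div]
    exact div_le_div_of_nonneg_right (by nlinarith) (by linarith)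
  rw [htrace]
  linarith
end

section
/- Let ε > 0. For all real numbers x ≥ 0 and x' ≥ 0, the following tangent-line inequality holds: x^{1/2} − ε·log(1 + x^{1/2}/ε) ≤ (x')^{1/2} − ε·log(1 + (x')^{1/2}/ε) + (x − x')/(2·((x')^{1/2} + ε)). -/
/-! Write `s = √x`, `t = √x'` and `φ(u) = u - ε log (1 + u / ε)`, so that `φ'(u) = u / (u + ε)`.
The claim becomes `φ(s) - s² / (2 (t + ε)) ≤ φ(t) - t² / (2 (t + ε))`, and the function
`u ↦ φ(u) - u² / (2 (t + ε))` has derivative `u (t - u) / ((u + ε) (t + ε))`: it increases on `[0, t]`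
and decreases on `[t, ∞)`, so it attains its maximum over `[0, ∞)` at `t`. -/

open Real Set

theorem isMaxOn_Ici_of_deriv_nonneg_of_deriv_nonpos {f f' : ℝ → ℝ} {a c : ℝ} (hac : a ≤ c)
    (hf : ContinuousOn f (Ici a)) (hderiv : ∀ u ∈ Ioi a, HasDerivAt f (f' u) u)
    (hinc : ∀ u ∈ Ioo a c, 0 ≤ f' u) (hdec : ∀ u ∈ Ioi c, f' u ≤ 0) :
    IsMaxOn f (Ici a) c := by
  intro u (hu : a ≤ u)
  rcases le_total u c with huc | hcu
  · have hmono : MonotoneOn f (Icc a c) := by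
      refine monotoneOn_of_hasDerivWithinAt_nonneg (f' := f') (convex_Icc a c)
        (hf.mono Icc_subset_Ici_self) (fun v hv ↦ ?_) (fun v hv ↦ ?_) <;> rw [interior_Icc] at hv
      exacts [(hderiv v hv.1).hasDerivWithinAt, hinc v hv]
    exact hmono ⟨hu, huc⟩ ⟨hac, le_rfl⟩ huc
  · have hanti : AntitoneOn f (Ici c) := by
      refine antitoneOn_of_hasDerivWithinAt_nonpos (f' := f') (convex_Ici c)
        (hf.mono (Ici_subset_Ici.2 hac)) (fun v hv ↦ ?_) (fun v hv ↦ ?_) <;> rw [interior_Ici] at hv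
      exacts [(hderiv v (lt_of_le_of_lt hac hv)).hasDerivWithinAt, hdec v hv]
    exact hanti (mem_Ici.2 le_rfl) hcu hcu

theorem hasDerivAt_sub_mul_log_one_add_div {ε u : ℝ} (hε : ε ≠ 0) (hu : u + ε ≠ 0) :
    HasDerivAt (fun v ↦ v - ε * log (1 + v / ε)) (u / (u + ε)) u := by
  have hlog : 1 + u / ε ≠ 0 := by
    rwa [one_add_div hε, div_ne_zero_iff, add_comm, and_iff_left hε]
  have h := (hasDerivAt_id' u).sub
    ((((hasDerivAt_id' u).div_const ε).const_add 1).log hlog |>.const_mul ε)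
  have hu' : ε + u ≠ 0 := by rwa [add_comm]
  refine h.congr_deriv ?_
  field_simp
  ring

theorem sub_mul_log_one_add_div_le {ε s t : ℝ} (hε : 0 < ε) (hs : 0 ≤ s) (ht : 0 ≤ t) :
    s - ε * log (1 + s / ε) ≤ t - ε * log (1 + t / ε) + (s ^ 2 - t ^ 2) / (2 * (t + ε)) := by
  have htε : 0 < t + ε := by linarith
  have hderiv : ∀ u ∈ Ioi (-ε),
      HasDerivAt (fun v ↦ v - ε * log (1 + v / ε) - v ^ 2 / (2 * (t + ε)))
        (u * (t - u) / ((u + ε) * (t + ε))) u := by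
    intro u (hu : -ε < u)
    have huε : u + ε ≠ 0 := by linarith
    have h := (hasDerivAt_sub_mul_log_one_add_div hε.ne' huε).sub
      ((hasDerivAt_pow 2 u).div_const (2 * (t + ε)))
    refine h.congr_deriv ?_
    push_cast
    field_simp
    ring
  have hmax : IsMaxOn (fun v ↦ v - ε * log (1 + v / ε) - v ^ 2 / (2 * (t + ε))) (Ici 0) t := by
    refine isMaxOn_Ici_of_deriv_nonneg_of_deriv_nonpos ht
      (fun u (hu : 0 ≤ u) ↦ (hderiv u (mem_Ioi.2 (by linarith))).continuousAt.continuousWithinAt)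
      (fun u (hu : 0 < u) ↦ hderiv u (mem_Ioi.2 (by linarith))) (fun u ⟨hu0, hut⟩ ↦ ?_)
      (fun u (htu : t < u) ↦ ?_)
    · have : 0 < u + ε := by linarith
      exact div_nonneg (mul_nonneg hu0.le (by linarith)) (by positivity)
    · have : 0 < u + ε := by linarith
      exact div_nonpos_of_nonpos_of_nonneg
        (mul_nonpos_of_nonneg_of_nonpos (by linarith) (by linarith)) (by positivity)
  have hst := isMaxOn_iff.1 hmax s hs
  rw [sub_div]
  linarith

/-- For ε > 0 and all x, x' ≥ 0, the tangent-line inequality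
`√x − ε·log(1 + √x/ε) ≤ √x' − ε·log(1 + √x'/ε) + (x − x')/(2(√x' + ε))`. -/
theorem stmt_10 (ε x x' : ℝ) (hε : 0 < ε) (hx : 0 ≤ x) (hx' : 0 ≤ x') :
    Real.sqrt x - ε * Real.log (1 + Real.sqrt x / ε)
      ≤ Real.sqrt x' - ε * Real.log (1 + Real.sqrt x' / ε)
        + (x - x') / (2 * (Real.sqrt x' + ε)) := by
  have h := sub_mul_log_one_add_div_le hε (sqrt_nonneg x) (sqrt_nonneg x')
  rwa [sq_sqrt hx, sq_sqrt hx'] at h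
end

section
/- Let ε > 0, let M ∈ ℝ^{p×p}, let w_1,…,w_p ≥ 0, and denote by e_i the i-th standard basis vector of ℝ^p. For all γ, γ⁽ᵗ⁾ ∈ ℝ^{p×d}, the penalty minorization holds: −Σ_{i=1}^p w_i·[‖e_iᵀMγ‖₂ − ε·log(1 + ‖e_iᵀMγ‖₂/ε)] ≥ −Σ_{i=1}^p w_i·[‖e_iᵀMγ⁽ᵗ⁾‖₂ − ε·log(1 + ‖e_iᵀMγ⁽ᵗ⁾‖₂/ε)] − Σ_{i=1}^p w_i·(‖e_iᵀMγ‖₂² − ‖e_iᵀMγ⁽ᵗ⁾‖₂²)/(2·(‖e_iᵀMγ⁽ᵗ⁾‖₂ + ε)). -/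
/-!
Each summand is `w i * φ ‖(Mγ)ᵢ‖` with `φ s = s - ε log (1 + s / ε)` (`logPenalty ε`). For `y ≥ 0`,
`s ↦ φ s - s² / (2 (y + ε))` has derivative `s (y - s) / ((ε + s) (y + ε))`, so on `[0, ∞)` it is
maximal at `s = y`. This is the scalar inequality `φ x ≤ φ y + (x² - y²) / (2 (y + ε))`, which is
then weighted by `w i ≥ 0` and summed.
-/

open Matrix

/-- Euclidean norm of a vector in `ℝ^m`. -/
noncomputable def enorm' {m : ℕ} (v : Fin m → ℝ) : ℝ := Real.sqrt (∑ i, v i ^ 2)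

open Set

theorem isMaxOn_Ici_of_hasDerivAt {f f' : ℝ → ℝ} {a y : ℝ} (hay : a ≤ y)
    (hf : ∀ t, a ≤ t → HasDerivAt f (f' t) t)
    (hf'_nonneg : ∀ t, a < t → t < y → 0 ≤ f' t)
    (hf'_nonpos : ∀ t, y < t → f' t ≤ 0) :
    IsMaxOn f (Ici a) y := by
  have hcont : ∀ {c b}, a ≤ c → ContinuousOn f (Icc c b) := fun hc t ht =>
    (hf t (hc.trans ht.1)).continuousAt.continuousWithinAt
  have hderiv : ∀ {c b}, a ≤ c →
      ∀ t ∈ interior (Icc c b), HasDerivWithinAt f (f' t) (interior (Icc c b)) t :=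
    fun hc t ht => by
      rw [interior_Icc] at ht
      exact (hf t (hc.trans ht.1.le)).hasDerivWithinAt
  intro x (hax : a ≤ x)
  rcases le_total x y with hxy | hyx
  · have hmono : MonotoneOn f (Icc a y) :=
      monotoneOn_of_hasDerivWithinAt_nonneg (convex_Icc a y) (hcont le_rfl) (hderiv le_rfl)
        fun t ht => by
          rw [interior_Icc] at ht
          exact hf'_nonneg t ht.1 ht.2
    exact hmono ⟨hax, hxy⟩ ⟨hay, le_rfl⟩ hxy
  · have hanti : AntitoneOn f (Icc y x) :=
      antitoneOn_of_hasDerivWithinAt_nonpos (convex_Icc y x) (hcont hay) (hderiv hay)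
        fun t ht => by
          rw [interior_Icc] at ht
          exact hf'_nonpos t ht.1
    exact hanti ⟨le_rfl, hyx⟩ ⟨hyx, le_rfl⟩ hyx

noncomputable def logPenalty (ε s : ℝ) : ℝ := s - ε * Real.log (1 + s / ε)

theorem hasDerivAt_logPenalty {ε s : ℝ} (hε : ε ≠ 0) (hs : ε + s ≠ 0) :
    HasDerivAt (logPenalty ε) (s / (ε + s)) s := by
  have hpos : 1 + s / ε ≠ 0 := by
    rw [one_add_div hε]
    exact div_ne_zero hs hε
  have hlog := (((hasDerivAt_id' s).div_const ε).const_add 1).log hpos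
  refine ((hasDerivAt_id' s).fun_sub (hlog.const_mul ε)).congr_deriv ?_
  field_simp
  ring

theorem logPenalty_le_add_sq_sub_sq_div {ε x y : ℝ} (hε : 0 < ε) (hx : 0 ≤ x) (hy : 0 ≤ y) :
    logPenalty ε x ≤ logPenalty ε y + (x ^ 2 - y ^ 2) / (2 * (y + ε)) := by
  have hmax : IsMaxOn (fun s => logPenalty ε s - s ^ 2 / (2 * (y + ε))) (Ici 0) y := by
    refine isMaxOn_Ici_of_hasDerivAt (f' := fun t => t * (y - t) / ((ε + t) * (y + ε))) hy
      (fun t ht => ?_) (fun t ht hty => ?_) fun t hyt => ?_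
    · have hεt : ε + t ≠ 0 := by positivity
      refine ((hasDerivAt_logPenalty hε.ne' hεt).fun_sub
        ((hasDerivAt_pow 2 t).div_const (2 * (y + ε)))).congr_deriv ?_
      field_simp
      ring
    · exact div_nonneg (mul_nonneg ht.le (by linarith)) (by positivity)
    · have ht : 0 < t := hy.trans_lt hyt
      exact div_nonpos_of_nonpos_of_nonneg (mul_nonpos_of_nonneg_of_nonpos ht.le (by linarith))
        (by positivity)
  have h : logPenalty ε x - x ^ 2 / (2 * (y + ε)) ≤ logPenalty ε y - y ^ 2 / (2 * (y + ε)) :=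
    hmax (mem_Ici.mpr hx)
  rw [sub_div]
  linarith

/-- For ε > 0, M ∈ ℝ^{p×p}, nonnegative weights w_i, and all
γ, γ⁽ᵗ⁾ ∈ ℝ^{p×d}, the penalty minorization holds, where `e_iᵀMγ` is the
i-th row of Mγ and ‖·‖₂ its Euclidean norm:
`−Σ_i w_i·[‖e_iᵀMγ‖ − ε·log(1 + ‖e_iᵀMγ‖/ε)]
  ≥ −Σ_i w_i·[‖e_iᵀMγ⁽ᵗ⁾‖ − ε·log(1 + ‖e_iᵀMγ⁽ᵗ⁾‖/ε)]
    − Σ_i w_i·(‖e_iᵀMγ‖² − ‖e_iᵀMγ⁽ᵗ⁾‖²)/(2(‖e_iᵀMγ⁽ᵗ⁾‖ + ε))`. -/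
theorem stmt_18 (p d : ℕ) (ε : ℝ) (hε : 0 < ε)
    (M : Matrix (Fin p) (Fin p) ℝ) (w : Fin p → ℝ) (hw : ∀ i, 0 ≤ w i)
    (γ γt : Matrix (Fin p) (Fin d) ℝ) :
    -∑ i, w i * (enorm' ((M * γ) i) - ε * Real.log (1 + enorm' ((M * γ) i) / ε))
      ≥ -∑ i, w i * (enorm' ((M * γt) i) - ε * Real.log (1 + enorm' ((M * γt) i) / ε))
        - ∑ i, w i * (enorm' ((M * γ) i) ^ 2 - enorm' ((M * γt) i) ^ 2) /
            (2 * (enorm' ((M * γt) i) + ε)) := by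
  have hterm : ∀ i, w i * logPenalty ε (enorm' ((M * γ) i)) ≤
      w i * logPenalty ε (enorm' ((M * γt) i)) +
        w i * (enorm' ((M * γ) i) ^ 2 - enorm' ((M * γt) i) ^ 2) /
          (2 * (enorm' ((M * γt) i) + ε)) := fun i => by
    rw [mul_div_assoc, ← mul_add]
    exact mul_le_mul_of_nonneg_left
      (logPenalty_le_add_sq_sub_sq_div hε (Real.sqrt_nonneg _) (Real.sqrt_nonneg _)) (hw i)
  have hsum := Finset.sum_le_sum fun i (_ : i ∈ Finset.univ) => hterm i
  rw [Finset.sum_add_distrib] at hsum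
  simp only [logPenalty] at hsum
  linarith
end
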